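/- arXiv:2308.04264 — 2 statements merged into one kernel-verified Lean document; each statement's English description precedes it below -/
import Mathlib

section
/- Let n be a positive integer, ε ∈ (0, 1/2), and let k be a positive integer with k ≥ 4n/ε². Let p₁, …, p_n ∈ (0,1] and let x₁, …, x_n be independent random variables with x_j distributed as NB(k, p_j). Set W = ∏_{j=1}^n (x_j / k) and μ = ∏_{j=1}^n (1/p_j). Then Pr[ |W − μ| ≥ ε·μ ] ≤ 1/3; in particular, with probability at least 2/3, W ∈ [(1−ε)μ, (1+ε)μ]. -/
/-!
The rising factorial moments of `NB(k, p)` are `E[x (x+1) ⋯ (x+r-1)] = k (k+1) ⋯ (k+r-1) / pʳ`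
(a negative binomial series), so `x / k` has mean `1 / p` and second moment at most
`(1 + 1/k) / p²`. By independence `W` has mean `μ` and `E[W²] ≤ (1 + 1/k)ⁿ μ²`, hence
`Var W ≤ ((1 + 1/k)ⁿ - 1) μ² ≤ ε² μ² / 3` because `n / k ≤ ε² / 4`, and Chebyshev's inequality
bounds the deviation probability by `1/3`.
-/

open MeasureTheory ProbabilityTheory

/-- The negative binomial pmf `NB(k,p)` on ℕ:
`C(m-1, k-1) pᵏ (1-p)^{m-k}` for `m ≥ k`, and `0` otherwise. -/
noncomputable def nbPmf (k : ℕ) (p : ℝ) : ℕ → ℝ := fun m =>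
  if k ≤ m then ((m - 1).choose (k - 1) : ℝ) * p ^ k * (1 - p) ^ (m - k) else 0
theorem Nat.ascFactorial_mul_choose (n k r : ℕ) :
    (n + (k + 1)).ascFactorial r * (n + k).choose k
      = (k + 1).ascFactorial r * (n + (k + r)).choose (k + r) := by
  induction r with
  | zero => simp
  | succ r ih =>
    calc (n + (k + 1)).ascFactorial (r + 1) * (n + k).choose k
        = (n + k + 1 + r) * ((n + (k + 1)).ascFactorial r * (n + k).choose k) := by
          rw [Nat.ascFactorial_succ, mul_assoc, ← add_assoc]
      _ = (k + 1).ascFactorial r * ((n + (k + r) + 1) * (n + (k + r)).choose (k + r)) := by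
          rw [ih]; ring
      _ = (k + 1).ascFactorial (r + 1) * (n + (k + (r + 1))).choose (k + (r + 1)) := by
          rw [Nat.add_one_mul_choose_eq, Nat.ascFactorial_succ, ← add_assoc k r 1,
            ← add_assoc n (k + r) 1]
          ring

theorem nbPmf_add_succ (k n : ℕ) (p : ℝ) :
    nbPmf (k + 1) p (n + (k + 1)) = (n + k).choose k * p ^ (k + 1) * (1 - p) ^ n := by
  rw [nbPmf, if_pos (Nat.le_add_left _ _), Nat.add_sub_cancel, Nat.add_succ_sub_one,
    Nat.add_sub_cancel]

theorem hasSum_ascFactorial_mul_nbPmf {k : ℕ} (hk : 0 < k) {p : ℝ} (hp₀ : 0 < p) (hp₂ : p < 2)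
    (r : ℕ) :
    HasSum (fun m => (m.ascFactorial r : ℝ) * nbPmf k p m) (k.ascFactorial r / p ^ r) := by
  obtain ⟨k, rfl⟩ := Nat.exists_eq_add_one_of_ne_zero hk.ne'
  have hq : ‖1 - p‖ < 1 := by rw [Real.norm_eq_abs, abs_lt]; constructor <;> linarith
  have hgeom := (hasSum_choose_mul_geometric_of_norm_lt_one (k + r) hq).mul_left
    ((k + 1).ascFactorial r * p ^ (k + 1))
  refine (hasSum_nat_add_iff' (k + 1)).1 ?_
  rw [Finset.sum_eq_zero fun m hm => by
    rw [nbPmf, if_neg (Finset.mem_range.1 hm).not_ge, mul_zero], sub_zero]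
  have hval : ((k + 1).ascFactorial r : ℝ) / p ^ r
      = (k + 1).ascFactorial r * p ^ (k + 1) * (1 / (1 - (1 - p)) ^ (k + r + 1)) := by
    rw [sub_sub_cancel]; field_simp; ring
  rw [hval]
  refine hgeom.congr_fun fun n => ?_
  have hchoose := congrArg (Nat.cast (R := ℝ)) (Nat.ascFactorial_mul_choose n k r)
  push_cast at hchoose
  rw [nbPmf_add_succ]
  linear_combination (p ^ (k + 1) * (1 - p) ^ n) * hchoose

theorem hasSum_nbPmf_mul_div {k : ℕ} (hk : 0 < k) {p : ℝ} (hp₀ : 0 < p) (hp₂ : p < 2) :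
    HasSum (fun m => nbPmf k p m * ((m : ℝ) / k)) (1 / p) := by
  have h := (hasSum_ascFactorial_mul_nbPmf hk hp₀ hp₂ 1).div_const k
  have hk' : (k : ℝ) ≠ 0 := by positivity
  simp only [Nat.ascFactorial_succ, Nat.ascFactorial_zero, add_zero, mul_one, pow_one] at h
  rw [show 1 / p = k / p / k by field_simp]
  exact h.congr_fun fun m => by ring

theorem hasSum_nbPmf_mul_div_sq {k : ℕ} (hk : 0 < k) {p : ℝ} (hp₀ : 0 < p) (hp₂ : p < 2) :
    HasSum (fun m => nbPmf k p m * ((m : ℝ) / k) ^ 2)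
      ((1 + 1 / k) * (1 / p) ^ 2 - 1 / (k * p)) := by
  have h := ((hasSum_ascFactorial_mul_nbPmf hk hp₀ hp₂ 2).sub
    (hasSum_ascFactorial_mul_nbPmf hk hp₀ hp₂ 1)).div_const ((k : ℝ) ^ 2)
  have hk' : (k : ℝ) ≠ 0 := by positivity
  simp only [Nat.ascFactorial_succ, Nat.ascFactorial_zero, add_zero, mul_one, pow_one] at h
  rw [show (1 + 1 / k) * (1 / p) ^ 2 - 1 / (k * p) = ((k + 1) * k / p ^ 2 - k / p) / k ^ 2 by
    field_simp]
  push_cast at h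
  exact h.congr_fun fun m => by ring

section LawOnCountable

variable {Ω X : Type*} [MeasurableSpace Ω] [MeasurableSpace X] [Countable X]
  [MeasurableSingletonClass X] {μ : Measure Ω} [IsFiniteMeasure μ] {x : Ω → X} {g : X → ℝ} {S : ℝ}

theorem integrable_comp_of_hasSum (hx : Measurable x)
    (h : HasSum (fun m => μ.real (x ⁻¹' {m}) * g m) S) : Integrable (fun ω => g (x ω)) μ := by
  have hg : Integrable g (μ.map x) := by
    rw [← Measure.sum_smul_dirac (μ.map x)]
    refine integrable_sum_dirac (fun m => measure_ne_top _ _) ?_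
    simpa [← measureReal_def, map_measureReal_apply hx (measurableSet_singleton _), abs_mul,
      abs_of_nonneg measureReal_nonneg] using h.summable.abs
  exact (integrable_map_measure (measurable_of_countable g).aestronglyMeasurable
    hx.aemeasurable).1 hg

theorem integral_comp_of_hasSum (hx : Measurable x)
    (h : HasSum (fun m => μ.real (x ⁻¹' {m}) * g m) S) : ∫ ω, g (x ω) ∂μ = S := by
  have hgm := (measurable_of_countable g).aestronglyMeasurable (μ := μ.map x)
  have hint :=
    (integrable_map_measure hgm hx.aemeasurable).2 (integrable_comp_of_hasSum (x := x) hx h)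
  rw [← integral_map hx.aemeasurable hgm, integral_countable hint, ← h.tsum_eq]
  simp [map_measureReal_apply hx (measurableSet_singleton _)]

end LawOnCountable

section NegativeBinomialLaw

variable {Ω : Type*} [MeasurableSpace Ω] {μ : Measure Ω} [IsFiniteMeasure μ] {x : Ω → ℕ}
  {k : ℕ} {p : ℝ}

theorem integral_div_of_nbPmf (hx : Measurable x) (hk : 0 < k) (hp₀ : 0 < p) (hp₂ : p < 2)
    (hlaw : ∀ m, μ.real (x ⁻¹' {m}) = nbPmf k p m) :
    ∫ ω, (x ω : ℝ) / k ∂μ = 1 / p :=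
  integral_comp_of_hasSum (g := fun m : ℕ => (m : ℝ) / k) hx
    (by simpa only [hlaw] using hasSum_nbPmf_mul_div hk hp₀ hp₂)

theorem integral_div_sq_of_nbPmf (hx : Measurable x) (hk : 0 < k) (hp₀ : 0 < p) (hp₂ : p < 2)
    (hlaw : ∀ m, μ.real (x ⁻¹' {m}) = nbPmf k p m) :
    ∫ ω, ((x ω : ℝ) / k) ^ 2 ∂μ = (1 + 1 / k) * (1 / p) ^ 2 - 1 / (k * p) :=
  integral_comp_of_hasSum (g := fun m : ℕ => ((m : ℝ) / k) ^ 2) hx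
    (by simpa only [hlaw] using hasSum_nbPmf_mul_div_sq hk hp₀ hp₂)

theorem integral_div_sq_le_of_nbPmf (hx : Measurable x) (hk : 0 < k) (hp₀ : 0 < p)
    (hp₂ : p < 2) (hlaw : ∀ m, μ.real (x ⁻¹' {m}) = nbPmf k p m) :
    ∫ ω, ((x ω : ℝ) / k) ^ 2 ∂μ ≤ (1 + 1 / k) * (∫ ω, (x ω : ℝ) / k ∂μ) ^ 2 := by
  rw [integral_div_sq_of_nbPmf hx hk hp₀ hp₂ hlaw, integral_div_of_nbPmf hx hk hp₀ hp₂ hlaw]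
  linarith [show 0 < 1 / (k * p) by positivity]

theorem memLp_two_div_of_nbPmf (hx : Measurable x) (hk : 0 < k) (hp₀ : 0 < p) (hp₂ : p < 2)
    (hlaw : ∀ m, μ.real (x ⁻¹' {m}) = nbPmf k p m) :
    MemLp (fun ω => (x ω : ℝ) / k) 2 μ :=
  (memLp_two_iff_integrable_sq
    ((measurable_from_nat (f := fun m : ℕ => (m : ℝ) / k)).comp hx).aestronglyMeasurable).2 <|
    integrable_comp_of_hasSum (g := fun m : ℕ => ((m : ℝ) / k) ^ 2) hx
      (by simpa only [hlaw] using hasSum_nbPmf_mul_div_sq hk hp₀ hp₂)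

end NegativeBinomialLaw

namespace ProbabilityTheory.iIndepFun

variable {Ω ι : Type*} [MeasurableSpace Ω] {μ : Measure Ω} {Y : ι → Ω → ℝ}

theorem integrable_finset_prod (hY : iIndepFun Y μ) (hm : ∀ i, Measurable (Y i))
    (hint : ∀ i, Integrable (Y i) μ) (s : Finset ι) : Integrable (∏ i ∈ s, Y i) μ := by
  have := hY.isProbabilityMeasure
  classical
  induction s using Finset.induction_on with
  | empty => exact integrable_const (1 : ℝ)
  | insert i s hi ih =>
    rw [Finset.prod_insert hi]
    exact (hY.indepFun_finsetProd_of_notMem hm hi).symm.integrable_mul (hint i) ih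

variable [Fintype ι]

theorem memLp_two_fun_prod (hY : iIndepFun Y μ) (hm : ∀ i, Measurable (Y i))
    (h2 : ∀ i, MemLp (Y i) 2 μ) : MemLp (fun ω => ∏ i, Y i ω) 2 μ := by
  have hsq := (hY.comp (fun _ y => y ^ 2) fun _ => measurable_id.pow_const 2).integrable_finset_prod
    (fun i => (hm i).pow_const 2) (fun i => (h2 i).integrable_sq) Finset.univ
  refine (memLp_two_iff_integrable_sq
    (Finset.measurable_fun_prod _ fun i _ => hm i).aestronglyMeasurable).2 ?_
  convert hsq using 1
  ext ω
  simp [Finset.prod_pow]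

theorem variance_fun_prod (hY : iIndepFun Y μ) (hm : ∀ i, Measurable (Y i))
    (h2 : ∀ i, MemLp (Y i) 2 μ) :
    variance (fun ω => ∏ i, Y i ω) μ
      = ∏ i, ∫ ω, Y i ω ^ 2 ∂μ - (∏ i, ∫ ω, Y i ω ∂μ) ^ 2 := by
  have := hY.isProbabilityMeasure
  have hsq := (hY.comp (fun _ y => y ^ 2) fun _ => measurable_id.pow_const 2)
    |>.integral_fun_prod_eq_prod_integral fun i => ((hm i).pow_const 2).aestronglyMeasurable
  rw [variance_eq_sub (hY.memLp_two_fun_prod hm h2),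
    hY.integral_fun_prod_eq_prod_integral fun i => (hm i).aestronglyMeasurable]
  simp only [Function.comp_apply] at hsq
  simp only [Pi.pow_apply, ← Finset.prod_pow, hsq]

theorem variance_fun_prod_le (hY : iIndepFun Y μ) (hm : ∀ i, Measurable (Y i))
    (h2 : ∀ i, MemLp (Y i) 2 μ) {c : ℝ} (hc : ∀ i, ∫ ω, Y i ω ^ 2 ∂μ ≤ c * (∫ ω, Y i ω ∂μ) ^ 2) :
    variance (fun ω => ∏ i, Y i ω) μ
      ≤ (c ^ Fintype.card ι - 1) * (∏ i, ∫ ω, Y i ω ∂μ) ^ 2 := by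
  have hprod : ∏ i, ∫ ω, Y i ω ^ 2 ∂μ ≤ c ^ Fintype.card ι * (∏ i, ∫ ω, Y i ω ∂μ) ^ 2 := by
    calc ∏ i, ∫ ω, Y i ω ^ 2 ∂μ ≤ ∏ i, (c * (∫ ω, Y i ω ∂μ) ^ 2) :=
          Finset.prod_le_prod (fun i _ => integral_nonneg fun ω => sq_nonneg _) fun i _ => hc i
      _ = c ^ Fintype.card ι * (∏ i, ∫ ω, Y i ω ∂μ) ^ 2 := by
          rw [Finset.prod_mul_distrib, Finset.prod_const, Finset.card_univ, Finset.prod_pow]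
  rw [hY.variance_fun_prod hm h2]
  linarith

end ProbabilityTheory.iIndepFun

theorem one_add_pow_le_inv_one_sub_mul {a : ℝ} (ha₀ : 0 ≤ a) (ha₁ : a ≤ 1) {n : ℕ}
    (hna : n * a < 1) : (1 + a) ^ n ≤ (1 - n * a)⁻¹ := by
  have hbernoulli : 1 - n * a ≤ (1 - a) ^ n := by
    simpa [sub_eq_add_neg] using one_add_mul_le_pow (by linarith : (-2 : ℝ) ≤ -a) n
  rw [← one_div, le_div_iff₀ (by linarith), mul_comm]
  calc (1 - n * a) * (1 + a) ^ n ≤ (1 - a) ^ n * (1 + a) ^ n := by gcongr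
    _ = (1 - a ^ 2) ^ n := by rw [← mul_pow]; ring
    _ ≤ 1 := pow_le_one₀ (by nlinarith) (by nlinarith)

theorem one_add_inv_pow_sub_one_le {n k : ℕ} {ε : ℝ} (hε₀ : 0 < ε) (hε : ε < 1 / 2)
    (hk : 4 * n / ε ^ 2 ≤ k) : (1 + 1 / (k : ℝ)) ^ n - 1 ≤ ε ^ 2 / 3 := by
  have ht : n * (1 / (k : ℝ)) ≤ ε ^ 2 / 4 := by
    rw [div_le_iff₀ (by positivity)] at hk
    rw [← div_eq_mul_one_div]
    exact div_le_of_le_mul₀ (by positivity) (by positivity) (by linarith)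
  have hε2 : ε ^ 2 < 1 / 4 := by nlinarith
  have hpow := one_add_pow_le_inv_one_sub_mul (by positivity) (by simpa using Nat.cast_inv_le_one k)
    (by linarith : n * (1 / (k : ℝ)) < 1)
  have hinv : (1 - n * (1 / (k : ℝ)))⁻¹ ≤ 1 + ε ^ 2 / 3 := by
    rw [inv_le_iff_one_le_mul₀ (by linarith)]
    nlinarith [mul_nonneg (by positivity : (0 : ℝ) ≤ n * (1 / (k : ℝ))) (sub_nonneg.2 hε2.le)]
  linarith

section Chebyshev

variable {Ω : Type*} [MeasurableSpace Ω] {μ : Measure Ω}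

theorem measureReal_ge_le_variance_div_sq [IsFiniteMeasure μ] {X : Ω → ℝ} (hX : MemLp X 2 μ)
    {c : ℝ} (hc : 0 < c) : μ.real {ω | c ≤ |X ω - μ[X]|} ≤ variance X μ / c ^ 2 :=
  ENNReal.toReal_le_of_le_ofReal (div_nonneg (variance_nonneg _ _) (sq_nonneg _))
    (meas_ge_le_variance_div_sq hX hc)

theorem one_sub_measureReal_le_measureReal_mem_Icc [IsProbabilityMeasure μ] {X : Ω → ℝ}
    (hX : Measurable X) (a c : ℝ) :
    1 - μ.real {ω | c ≤ |X ω - a|} ≤ μ.real {ω | X ω ∈ Set.Icc (a - c) (a + c)} := by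
  rw [← probReal_compl_eq_one_sub (measurableSet_le measurable_const (hX.sub_const a).abs)]
  refine measureReal_mono fun ω hω => ?_
  simp only [Set.mem_compl_iff, Set.mem_ofPred_eq, not_le, abs_lt] at hω
  constructor <;> linarith [hω.1, hω.2]

end Chebyshev

theorem nb_product_concentration_general (n : ℕ)
    (ε : ℝ) (hε : ε ∈ Set.Ioo (0 : ℝ) (1/2))
    (k : ℕ) (hk : 0 < k) (hkge : (4 : ℝ) * n / ε ^ 2 ≤ k)
    (p : Fin n → ℝ) (hp : ∀ j, p j ∈ Set.Ioc (0 : ℝ) 1)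
    {Ω : Type*} [MeasurableSpace Ω] (μ : Measure Ω) [IsProbabilityMeasure μ]
    (x : Fin n → Ω → ℕ) (hmeas : ∀ j, Measurable (x j))
    (hindep : iIndepFun x μ)
    (hdist : ∀ j, ∀ m : ℕ, (μ (x j ⁻¹' {m})).toReal = nbPmf k (p j) m) :
    (μ {ω | ε * (∏ j, 1 / p j) ≤ |(∏ j, (x j ω : ℝ) / k) - ∏ j, 1 / p j|}).toReal
        ≤ 1 / 3
    ∧ 2 / 3 ≤ (μ {ω | (∏ j, (x j ω : ℝ) / k)
          ∈ Set.Icc ((1 - ε) * ∏ j, 1 / p j) ((1 + ε) * ∏ j, 1 / p j)}).toReal := by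
  obtain ⟨hε₀, hε₁⟩ := hε
  set P := ∏ j, 1 / p j
  let Y : Fin n → Ω → ℝ := fun j ω => (x j ω : ℝ) / k
  have hp₂ j : p j < 2 := by linarith [(hp j).2]
  have hYm j : Measurable (Y j) :=
    (measurable_from_nat (f := fun m : ℕ => (m : ℝ) / k)).comp (hmeas j)
  have hYind : iIndepFun Y μ := hindep.comp (fun _ m => (m : ℝ) / k) fun _ => measurable_from_nat
  have hY2 j : MemLp (Y j) 2 μ := memLp_two_div_of_nbPmf (hmeas j) hk (hp j).1 (hp₂ j) (hdist j)
  have hmean : ∏ j, ∫ ω, Y j ω ∂μ = P :=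
    Finset.prod_congr rfl fun j _ => integral_div_of_nbPmf (hmeas j) hk (hp j).1 (hp₂ j) (hdist j)
  have hvar : variance (fun ω => ∏ j, Y j ω) μ ≤ ε ^ 2 / 3 * P ^ 2 := by
    refine (hYind.variance_fun_prod_le hYm hY2 fun j =>
      integral_div_sq_le_of_nbPmf (hmeas j) hk (hp j).1 (hp₂ j) (hdist j)).trans ?_
    rw [hmean, Fintype.card_fin]
    gcongr
    exact one_add_inv_pow_sub_one_le hε₀ hε₁ hkge
  have hP : 0 < P := Finset.prod_pos fun j _ => one_div_pos.2 (hp j).1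
  have hdev : μ.real {ω | ε * P ≤ |∏ j, Y j ω - P|} ≤ 1 / 3 := by
    have hcheb :=
      measureReal_ge_le_variance_div_sq (hYind.memLp_two_fun_prod hYm hY2) (mul_pos hε₀ hP)
    rw [hYind.integral_fun_prod_eq_prod_integral fun j => (hYm j).aestronglyMeasurable,
      hmean] at hcheb
    calc _ ≤ variance (fun ω => ∏ j, Y j ω) μ / (ε * P) ^ 2 := hcheb
      _ ≤ ε ^ 2 / 3 * P ^ 2 / (ε * P) ^ 2 := by gcongr
      _ = 1 / 3 := by field_simp
  have hIcc := one_sub_measureReal_le_measureReal_mem_Icc (μ := μ)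
    (Finset.measurable_fun_prod Finset.univ fun j _ => hYm j) P (ε * P)
  rw [← one_sub_mul, ← one_add_mul] at hIcc
  exact ⟨hdev, le_trans (by linarith) hIcc⟩

/-- Let `ε ∈ (0,1/2)`, let `k ≥ 4n/ε²` be a positive integer,
and let `xⱼ ∼ NB(k, pⱼ)` be independent with `pⱼ ∈ (0,1]`. With
`W = ∏ⱼ (xⱼ/k)` and `μ* = ∏ⱼ 1/pⱼ`, we have `Pr[|W − μ*| ≥ ε·μ*] ≤ 1/3`;
in particular `W ∈ [(1−ε)μ*, (1+ε)μ*]` with probability at least `2/3`. -/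
theorem nb_product_concentration (n : ℕ) (hn : 0 < n)
    (ε : ℝ) (hε : ε ∈ Set.Ioo (0 : ℝ) (1/2))
    (k : ℕ) (hk : 0 < k) (hkge : (4 : ℝ) * n / ε ^ 2 ≤ k)
    (p : Fin n → ℝ) (hp : ∀ j, p j ∈ Set.Ioc (0 : ℝ) 1)
    {Ω : Type*} [MeasurableSpace Ω] (μ : Measure Ω) [IsProbabilityMeasure μ]
    (x : Fin n → Ω → ℕ) (hmeas : ∀ j, Measurable (x j))
    (hindep : iIndepFun x μ)
    (hdist : ∀ j, ∀ m : ℕ, (μ (x j ⁻¹' {m})).toReal = nbPmf k (p j) m) :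
    (μ {ω | ε * (∏ j, 1 / p j) ≤ |(∏ j, (x j ω : ℝ) / k) - ∏ j, 1 / p j|}).toReal
        ≤ 1 / 3
    ∧ 2 / 3 ≤ (μ {ω | (∏ j, (x j ω : ℝ) / k)
          ∈ Set.Icc ((1 - ε) * ∏ j, 1 / p j) ((1 + ε) * ∏ j, 1 / p j)}).toReal :=
  nb_product_concentration_general n ε hε k hk hkge p hp μ x hmeas hindep hdist
end

section
/- Let n be a positive integer, θ ∈ (0,1), and let Σ be a finite nonempty alphabet. Let D be a probability mass function on Σ^n with full support (D(σ) > 0 for all σ), and let D' be a probability mass function on Σ^n such that for every ℓ ∈ {1, …, n}, every prefix ρ ∈ Σ^{ℓ−1}, and every c ∈ Σ: D'^ℓ_ρ(c) = (1 − θ)·D^ℓ_ρ(c) + θ/|Σ|. Then d_TV(D, D') ≤ θ·n. -/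
/-!
By the chain rule, `D σ` and `D' σ` are the products of their `n` conditional marginals along `σ`,
and each marginal of `D'` is at least `1 - θ` times the corresponding marginal of `D`. Hence
`D' ≥ (1 - θ)ⁿ D ≥ (1 - θ n) D` pointwise (Bernoulli), and a pointwise bound `Q ≥ (1 - ε) P`
between two distributions gives `d_TV(P, Q) ≤ ε`.
-/

open Finset

/-- The probability mass `D(S_{σ_{<j}})` of the set of strings agreeing with `σ`
on the first `j` coordinates. -/
noncomputable def prefMass {n : ℕ} {A : Type*} [Fintype A] [DecidableEq A]
    (D : (Fin n → A) → ℝ) (σ : Fin n → A) (j : ℕ) : ℝ :=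
  ∑ w : Fin n → A, if ∀ i : Fin n, (i : ℕ) < j → w i = σ i then D w else 0

/-- The conditional marginal `D^{j+1}_{σ_{<j+1}}(σ[j+1])` (0-indexed `j`).
Quantifying over all `σ` and all `j` captures all pairs of a prefix
`ρ ∈ Σ^{ℓ-1}` and a symbol `c`. -/
noncomputable def condMarg {n : ℕ} {A : Type*} [Fintype A] [DecidableEq A]
    (D : (Fin n → A) → ℝ) (σ : Fin n → A) (j : Fin n) : ℝ :=
  prefMass D σ (j + 1) / prefMass D σ j

theorem half_sum_abs_sub_le_of_le_mul {ι : Type*} [Fintype ι] {P Q : ι → ℝ} {ε : ℝ}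
    (hε : 0 ≤ ε) (hP : ∀ i, 0 ≤ P i) (hPQ : ∑ i, P i = ∑ i, Q i)
    (hle : ∀ i, (1 - ε) * P i ≤ Q i) :
    (1 / 2) * ∑ i, |P i - Q i| ≤ ε * ∑ i, P i := by
  have hpt : ∀ i, |P i - Q i| ≤ (Q i - P i) + 2 * ε * P i := fun i => by
    have := mul_nonneg hε (hP i)
    rw [abs_le]
    constructor <;> linarith [hle i]
  have := sum_le_sum fun i (_ : i ∈ univ) => hpt i
  rw [sum_add_distrib, sum_sub_distrib, hPQ, ← mul_sum] at this
  linarith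

section PrefixMass

variable {n : ℕ} {A : Type*} [Fintype A] [DecidableEq A] {D : (Fin n → A) → ℝ}

theorem prefMass_zero (D : (Fin n → A) → ℝ) (σ : Fin n → A) :
    prefMass D σ 0 = ∑ w, D w := by
  simp [prefMass]

theorem prefMass_self (D : (Fin n → A) → ℝ) (σ : Fin n → A) : prefMass D σ n = D σ := by
  rw [prefMass, sum_eq_single σ]
  · simp
  · intro w _ hw
    exact if_neg fun h => hw (funext fun i => h i i.isLt)
  · simp

theorem prefMass_nonneg (hD : ∀ σ, 0 ≤ D σ) (σ : Fin n → A) (j : ℕ) : 0 ≤ prefMass D σ j :=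
  sum_nonneg fun w _ => by split_ifs <;> simp [hD w]

theorem prefMass_succ_le (hD : ∀ σ, 0 ≤ D σ) (σ : Fin n → A) (j : ℕ) :
    prefMass D σ (j + 1) ≤ prefMass D σ j :=
  sum_le_sum fun w _ => by
    split_ifs with h₁ h₂
    · exact le_rfl
    · exact absurd (fun i hi => h₁ i (Nat.lt_succ_of_lt hi)) h₂
    · exact hD w
    · exact le_rfl

/-- The chain rule. For nonnegative `D` it holds even when the prefix has mass zero,
since then the longer prefix has mass zero too. -/
theorem prefMass_succ_eq_condMarg_mul (hD : ∀ σ, 0 ≤ D σ) (σ : Fin n → A) (j : Fin n) :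
    prefMass D σ (j + 1) = condMarg D σ j * prefMass D σ j := by
  by_cases h : prefMass D σ j = 0
  · rw [h, mul_zero]
    exact le_antisymm (h ▸ prefMass_succ_le hD σ j) (prefMass_nonneg hD σ _)
  · rw [condMarg, div_mul_cancel₀ _ h]

theorem condMarg_nonneg (hD : ∀ σ, 0 ≤ D σ) (σ : Fin n → A) (j : Fin n) :
    0 ≤ condMarg D σ j :=
  div_nonneg (prefMass_nonneg hD σ _) (prefMass_nonneg hD σ _)

variable {D' : (Fin n → A) → ℝ} {c : ℝ}

theorem pow_mul_prefMass_le (hc : 0 ≤ c) (hD : ∀ σ, 0 ≤ D σ) (hD' : ∀ σ, 0 ≤ D' σ)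
    (hsum : ∑ σ, D σ ≤ ∑ σ, D' σ) (hcond : ∀ σ j, c * condMarg D σ j ≤ condMarg D' σ j)
    (σ : Fin n → A) : ∀ j ≤ n, c ^ j * prefMass D σ j ≤ prefMass D' σ j
  | 0, _ => by simpa [prefMass_zero] using hsum
  | j + 1, hj => by
    have ih := pow_mul_prefMass_le hc hD hD' hsum hcond σ j (by omega)
    calc c ^ (j + 1) * prefMass D σ (j + 1)
        = (c * condMarg D σ ⟨j, hj⟩) * (c ^ j * prefMass D σ j) := by
          rw [prefMass_succ_eq_condMarg_mul hD σ ⟨j, hj⟩]; ring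
      _ ≤ condMarg D' σ ⟨j, hj⟩ * prefMass D' σ j :=
          mul_le_mul (hcond σ _) ih (mul_nonneg (pow_nonneg hc j) (prefMass_nonneg hD σ j))
            (condMarg_nonneg hD' σ _)
      _ = prefMass D' σ (j + 1) := (prefMass_succ_eq_condMarg_mul hD' σ ⟨j, hj⟩).symm

theorem pow_mul_le_of_mul_condMarg_le (hc : 0 ≤ c) (hD : ∀ σ, 0 ≤ D σ)
    (hD' : ∀ σ, 0 ≤ D' σ) (hsum : ∑ σ, D σ ≤ ∑ σ, D' σ)
    (hcond : ∀ σ j, c * condMarg D σ j ≤ condMarg D' σ j) (σ : Fin n → A) :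
    c ^ n * D σ ≤ D' σ := by
  simpa only [prefMass_self] using pow_mul_prefMass_le hc hD hD' hsum hcond σ n le_rfl

end PrefixMass

theorem tv_tamed_le_hypergrid_general {n : ℕ} (θ : ℝ) (hθ : θ ∈ Set.Ioo (0 : ℝ) 1)
    {A : Type*} [Fintype A] [DecidableEq A]
    (D D' : (Fin n → A) → ℝ)
    (hD0 : ∀ σ, 0 < D σ) (hD1 : ∑ σ, D σ = 1)
    (hD'0 : ∀ σ, 0 ≤ D' σ) (hD'1 : ∑ σ, D' σ = 1)
    (htame : ∀ (σ : Fin n → A) (j : Fin n),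
      condMarg D' σ j = (1 - θ) * condMarg D σ j + θ / (Fintype.card A : ℝ)) :
    (1 / 2) * ∑ σ, |D σ - D' σ| ≤ θ * n := by
  obtain ⟨hθ0, hθ1⟩ := hθ
  have hD : ∀ σ, 0 ≤ D σ := fun σ => (hD0 σ).le
  have hcond : ∀ σ j, (1 - θ) * condMarg D σ j ≤ condMarg D' σ j := fun σ j => by
    rw [htame]
    exact le_add_of_nonneg_right (div_nonneg hθ0.le (Nat.cast_nonneg _))
  have hpow := pow_mul_le_of_mul_condMarg_le (by linarith) hD hD'0 (hD1.trans hD'1.symm).le hcond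
  have hbern : 1 - θ * n ≤ (1 - θ) ^ n := by
    simpa [sub_eq_add_neg, mul_comm] using one_add_mul_le_pow (a := -θ) (by linarith) n
  have hle : ∀ σ, (1 - θ * n) * D σ ≤ D' σ := fun σ =>
    (mul_le_mul_of_nonneg_right hbern (hD σ)).trans (hpow σ)
  simpa [hD1] using
    half_sum_abs_sub_le_of_le_mul (by positivity) hD (hD1.trans hD'1.symm) hle

/-- If `D` is a fully supported pmf on `Σⁿ`, `θ ∈ (0,1)`,
and `D'` is a pmf whose conditional marginals satisfy
`D'^ℓ_ρ(c) = (1-θ)·D^ℓ_ρ(c) + θ/|Σ|` for every prefix `ρ` and symbol `c`,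
then `d_TV(D, D') ≤ θ·n`. -/
theorem tv_tamed_le_hypergrid {n : ℕ} (hn : 0 < n) (θ : ℝ) (hθ : θ ∈ Set.Ioo (0 : ℝ) 1)
    {A : Type*} [Fintype A] [DecidableEq A] [Nonempty A]
    (D D' : (Fin n → A) → ℝ)
    (hD0 : ∀ σ, 0 < D σ) (hD1 : ∑ σ, D σ = 1)
    (hD'0 : ∀ σ, 0 ≤ D' σ) (hD'1 : ∑ σ, D' σ = 1)
    (htame : ∀ (σ : Fin n → A) (j : Fin n),
      condMarg D' σ j = (1 - θ) * condMarg D σ j + θ / (Fintype.card A : ℝ)) :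
    (1 / 2) * ∑ σ, |D σ - D' σ| ≤ θ * n :=
  tv_tamed_le_hypergrid_general θ hθ D D' hD0 hD1 hD'0 hD'1 htame
end
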